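/- Let 0 < L ≤ U and let all processing times lie in [L, U]. Suppose a configuration (x, p) changes to (x', p') in one step, where either (i) x' is obtained from x by flipping exactly one bit and p' = p, or (ii) x' = x and p' is obtained from p by changing the processing time of exactly one job to a new value in [L, U]. If the fuller machine switches, i.e., M₁ is the strictly fuller machine in (x, p) and M₂ is the strictly fuller machine in (x', p'), then min{d(x, p), d(x', p')} ≤ U, where d(·,·) denotes the discrepancy with respect to the indicated assignment and processing times. In case (i), moreover, d(x, p) + d(x', p) = 2 p_i where i is the flipped bit. -/
import Mathlib


open scoped BigOperators ENNReal

namespace MakespanDyn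

/-- Load of machine `b` (machine `M₁` corresponds to `b = false`, `M₂` to `b = true`). -/
def load {n : ℕ} (p : Fin n → ℝ) (x : Fin n → Bool) (b : Bool) : ℝ :=
  ∑ i, if x i = b then p i else 0

/-- The makespan of the solution `x` under processing times `p`. -/
def mspan {n : ℕ} (p : Fin n → ℝ) (x : Fin n → Bool) : ℝ :=
  max (load p x false) (load p x true)

/-- The discrepancy of the solution `x` under processing times `p`. -/
def disc {n : ℕ} (p : Fin n → ℝ) (x : Fin n → Bool) : ℝ :=
  |load p x false - load p x true|

/-- Flip bit `i` of `x`. -/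
def flip {n : ℕ} (x : Fin n → Bool) (i : Fin n) : Fin n → Bool :=
  Function.update x i (!(x i))

lemma load_add {n : ℕ} (p : Fin n → ℝ) (x : Fin n → Bool) :
    load p x false + load p x true = ∑ i, p i := by
  unfold load
  rw [← Finset.sum_add_distrib]
  apply Finset.sum_congr rfl
  intro i _
  cases x i <;> simp

lemma load_flip {n : ℕ} (p : Fin n → ℝ) (x : Fin n → Bool) (i : Fin n) (b : Bool) :
    load p (flip x i) b = load p x b + (if x i = b then -(p i) else p i) := by
  unfold load flip
  rw [← Finset.add_sum_erase _ _ (Finset.mem_univ i),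
      ← Finset.add_sum_erase _ (fun j => if x j = b then p j else 0) (Finset.mem_univ i)]
  have herase : (∑ j ∈ Finset.univ.erase i, if Function.update x i (!(x i)) j = b then p j else 0)
      = ∑ j ∈ Finset.univ.erase i, if x j = b then p j else 0 := by
    apply Finset.sum_congr rfl
    intro j hj
    rw [Function.update_of_ne (Finset.ne_of_mem_erase hj)]
  rw [herase, Function.update_self]
  cases hx : x i <;> cases b <;> simp <;> ring

lemma load_change {n : ℕ} (p p' : Fin n → ℝ) (x : Fin n → Bool) (k : Fin n)
    (h : ∀ j, j ≠ k → p' j = p j) (b : Bool) :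
    load p' x b = load p x b + (if x k = b then p' k - p k else 0) := by
  unfold load
  rw [← Finset.add_sum_erase _ _ (Finset.mem_univ k),
      ← Finset.add_sum_erase _ (fun j => if x j = b then p j else 0) (Finset.mem_univ k)]
  have herase : (∑ j ∈ Finset.univ.erase k, if x j = b then p' j else 0)
      = ∑ j ∈ Finset.univ.erase k, if x j = b then p j else 0 := by
    apply Finset.sum_congr rfl
    intro j hj
    rw [h j (Finset.ne_of_mem_erase hj)]
  rw [herase]
  cases x k <;> cases b <;> simp <;> ring

/-- Suppose `(x, p)` changes in one step to `(x', p')` by either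
(i) flipping exactly one bit, or (ii) changing the processing time of exactly one job
to a new value in `[L, U]`.  If the fuller machine switches (`M₁` strictly fuller
before, `M₂` strictly fuller after), then `min{d(x, p), d(x', p')} ≤ U`; in case (i),
moreover `d(x, p) + d(x', p') = 2 p_i` for the flipped bit `i`. -/
theorem fuller_machine_switch (n : ℕ) (L U : ℝ) (hL : 0 < L) (hLU : L ≤ U)
    (p p' : Fin n → ℝ) (hp : ∀ i, p i ∈ Set.Icc L U) (hp' : ∀ i, p' i ∈ Set.Icc L U)
    (x x' : Fin n → Bool)
    (hstep : (∃ i, x' = flip x i ∧ p' = p) ∨ (x' = x ∧ ∃ k, ∀ j, j ≠ k → p' j = p j))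
    (h₁ : (∑ i, p i) / 2 < load p x false)
    (h₂ : (∑ i, p' i) / 2 < load p' x' true) :
    min (disc p x) (disc p' x') ≤ U ∧
      ∀ i, x' = flip x i → p' = p → disc p x + disc p' x' = 2 * p i := by
  have hA : load p x true < load p x false := by
    have := load_add p x; linarith
  have hB : load p' x' false < load p' x' true := by
    have := load_add p' x'; linarith
  have hdx : disc p x = load p x false - load p x true :=
    abs_of_pos (by linarith)
  have hdx' : disc p' x' = load p' x' true - load p' x' false := by
    unfold disc
    rw [abs_of_neg (by linarith : load p' x' false - load p' x' true < 0)]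
    ring
  have key : ∀ i, x' = flip x i → p' = p → disc p x + disc p' x' = 2 * p i := by
    intro i hx hpp
    rw [hx, hpp] at hB hdx' ⊢
    have hf := load_flip p x i false
    have ht := load_flip p x i true
    cases hxi : x i with
    | true =>
      exfalso
      rw [hxi] at hf ht
      simp only [if_pos rfl, Bool.true_eq_false, if_neg] at hf ht
      simp at hf ht
      linarith [(hp i).1]
    | false =>
      rw [hxi] at hf ht
      simp at hf ht
      rw [hdx, hdx']
      linarith
  refine ⟨?_, key⟩
  rcases hstep with ⟨i, hx, hpp⟩ | ⟨hx, k, hk⟩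
  · have hsum := key i hx hpp
    have h0 : 0 ≤ disc p x := abs_nonneg _
    have h0' : 0 ≤ disc p' x' := abs_nonneg _
    rcases le_total (disc p x) (disc p' x') with h | h
    · rw [min_eq_left h]; linarith [(hp i).2]
    · rw [min_eq_right h]; linarith [(hp i).2]
  · rw [hx] at hB hdx' ⊢
    have hf := load_change p p' x k hk false
    have ht := load_change p p' x k hk true
    cases hxk : x k with
    | false =>
      rw [hxk] at hf ht
      simp at hf ht
      refine le_trans (min_le_left _ _) ?_
      rw [hdx]
      linarith [(hp k).2, (hp' k).1]
    | true =>
      rw [hxk] at hf ht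
      simp at hf ht
      refine le_trans (min_le_right _ _) ?_
      rw [hdx']
      linarith [(hp k).1, (hp' k).2]

end MakespanDyn
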